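/- arXiv:1504.06363 — 2 statements merged into one kernel-verified Lean document; each statement's English description precedes it below -/
import Mathlib

section
/- There is a constant C > 0 such that the following holds for all n and all G ≥ 1. Let the processing times p_1,…,p_n ∈ {1,…,n} be fixed integers such that every set of G consecutive values contained in {1,…,n} contains the processing time of at least one job (i.e., there is no interval of G consecutive values in {1,…,n} avoided by all p_i). Then, from any initial solution, the expected number of iterations of the (1+1) EA until the current solution x satisfies d(x) ≤ G is at most C · n⁴. -/
open scoped BigOperators ENNReal

namespace MakespanDyn

/-- Load of machine `b` (machine `M₁` corresponds to `b = false`, `M₂` to `b = true`). -/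
def load {n : ℕ} (p : Fin n → ℝ) (x : Fin n → Bool) (b : Bool) : ℝ :=
  ∑ i, if x i = b then p i else 0

/-- The makespan of the solution `x` under processing times `p`. -/
def mspan {n : ℕ} (p : Fin n → ℝ) (x : Fin n → Bool) : ℝ :=
  max (load p x false) (load p x true)

/-- The discrepancy of the solution `x` under processing times `p`. -/
def disc {n : ℕ} (p : Fin n → ℝ) (x : Fin n → Bool) : ℝ :=
  |load p x false - load p x true|

/-- Flip bit `i` of `x`. -/
def flip {n : ℕ} (x : Fin n → Bool) (i : Fin n) : Fin n → Bool :=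
  Function.update x i (!(x i))

/-- One iteration of RLS with processing times `p`: flip one uniformly random bit
and accept iff the makespan does not increase. -/
noncomputable def rlsStep {n : ℕ} (hn : 0 < n) (p : Fin n → ℝ) (x : Fin n → Bool) :
    PMF (Fin n → Bool) :=
  haveI : Nonempty (Fin n) := Fin.pos_iff_nonempty.mp hn
  (PMF.uniformOfFintype (Fin n)).map fun i =>
    if mspan p (flip x i) ≤ mspan p x then flip x i else x

/-- The distribution of the mutation mask of the (1+1) EA: every bit is set
independently with probability `1/n`. -/
noncomputable def maskPMF (n : ℕ) (hn : 0 < n) : PMF (Fin n → Bool) :=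
  ⟨fun m => ∏ i, (if m i then (n : ℝ≥0∞)⁻¹ else 1 - (n : ℝ≥0∞)⁻¹), by
    classical
    have hinv : (n : ℝ≥0∞)⁻¹ ≤ 1 := ENNReal.inv_le_one.mpr (by exact_mod_cast hn)
    have hsum :
        ∑ m : Fin n → Bool, ∏ i, (if m i then (n : ℝ≥0∞)⁻¹ else 1 - (n : ℝ≥0∞)⁻¹) = 1 := by
      rw [← Fintype.piFinset_univ, ← Finset.prod_univ_sum
        (fun _ : Fin n => (Finset.univ : Finset Bool))
        (fun _ b => if b then (n : ℝ≥0∞)⁻¹ else 1 - (n : ℝ≥0∞)⁻¹)]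
      have key : (n : ℝ≥0∞)⁻¹ + (1 - (n : ℝ≥0∞)⁻¹) = 1 := add_tsub_cancel_of_le hinv
      simp [key]
    have := hasSum_fintype
      (fun m : Fin n → Bool => ∏ i, (if m i then (n : ℝ≥0∞)⁻¹ else 1 - (n : ℝ≥0∞)⁻¹))
    rwa [hsum] at this⟩

/-- One iteration of the (1+1) EA with processing times `p`: flip every bit
independently with probability `1/n` and accept iff the makespan does not increase. -/
noncomputable def eaStep {n : ℕ} (hn : 0 < n) (p : Fin n → ℝ) (x : Fin n → Bool) :
    PMF (Fin n → Bool) :=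
  (maskPMF n hn).map fun m =>
    let y : Fin n → Bool := fun i => xor (m i) (x i)
    if mspan p y ≤ mspan p x then y else x

/-- A configuration: a solution together with the current processing times. -/
abbrev Cfg (n : ℕ) := (Fin n → Bool) × (Fin n → ℝ)

/-- The run of an algorithm given by `step` with an adversary `adv`, which may
change the processing times (as an arbitrary function of the history) before each
iteration.  `run step adv init t` is the distribution of the history (most recent
configuration first) after `t` iterations. -/
noncomputable def run {n : ℕ} (step : (Fin n → ℝ) → (Fin n → Bool) → PMF (Fin n → Bool))
    (adv : List (Cfg n) → (Fin n → ℝ)) (init : Cfg n) : ℕ → PMF (List (Cfg n))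
  | 0 => PMF.pure [init]
  | t + 1 =>
      (run step adv init t).bind fun h =>
        (step (adv h) h.headI.1).map fun x' => (x', adv h) :: h

/-- The expected number of iterations until a configuration satisfying `good` occurs,
computed as `∑_{t ≥ 0} Pr(T > t)` where `T > t` iff no configuration in the history
after `t` iterations is good. -/
noncomputable def expectedHittingTime {σ : Type*} (runs : ℕ → PMF (List σ))
    (good : σ → Prop) : ℝ≥0∞ :=
  ∑' t, (runs t).toOuterMeasure {h | ∀ c ∈ h, ¬ good c}

end MakespanDyn

/-!
Additive drift with the potential `d(x) / 2`. Since `d = 2 f - ∑ pᵢ`, accepted steps never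
increase `d`. While `d(x) > G`, flipping one or two suitable bits lowers `d` by at least `2`:
on the fuller machine either some job is smaller than the load difference and can be moved
over, or the smallest job there has size `s > G` and can be swapped with a job of size in
`[s - G, s - 1]`, which exists by the gap condition and must lie on the other machine. That
mutation has probability at least `n⁻² (1 - 1/n)ⁿ⁻¹ ≥ 1 / (4 n²)`, so the expected hitting
time is at most `4 n² · d(x₀) / 2 ≤ 2 n⁴`.
-/

namespace PMF

variable {α β : Type*}

theorem tsum_bind_mul (μ : PMF α) (κ : α → PMF β) (g : β → ℝ≥0∞) :
    ∑' b, μ.bind κ b * g b = ∑' a, μ a * ∑' b, κ a b * g b := by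
  simp only [bind_apply, ← ENNReal.tsum_mul_right, ← ENNReal.tsum_mul_left, mul_assoc]
  exact ENNReal.tsum_comm

theorem tsum_map_mul (μ : PMF α) (f : α → β) (g : β → ℝ≥0∞) :
    ∑' b, μ.map f b * g b = ∑' a, μ a * g (f a) := by
  rw [← bind_pure_comp, tsum_bind_mul]
  congr! with a
  simp [pure_apply]

theorem tsum_pure_mul (a : α) (g : α → ℝ≥0∞) : ∑' b, pure a b * g b = g a := by
  simp [pure_apply]

theorem tsum_mul_add_le (μ : PMF α) {g : α → ℝ≥0∞} {c : ℝ≥0∞} {a₀ : α}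
    (hg : ∀ a, g a ≤ c) (ha₀ : g a₀ + 1 ≤ c) : ∑' a, μ a * g a + μ a₀ ≤ c := by
  classical
  calc ∑' a, μ a * g a + μ a₀
      = ∑' a, μ a * (g a + if a = a₀ then 1 else 0) := by
        simp only [mul_add, mul_ite, mul_one, mul_zero, ENNReal.tsum_add, tsum_ite_eq]
    _ ≤ ∑' a, μ a * c := by
        gcongr with a
        split_ifs with h
        · exact h ▸ ha₀
        · simpa using hg a
    _ = c := by rw [ENNReal.tsum_mul_right, tsum_coe, one_mul]

end PMF

theorem ENNReal.tsum_le_of_add_le {u q : ℕ → ℝ≥0∞} (h : ∀ t, u (t + 1) + q t ≤ u t) :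
    ∑' t, q t ≤ u 0 := by
  have partial_sums : ∀ k, u k + ∑ t ∈ Finset.range k, q t ≤ u 0 := by
    intro k
    induction k with
    | zero => simp
    | succ k ih =>
      calc u (k + 1) + ∑ t ∈ Finset.range (k + 1), q t
          = (u (k + 1) + q k) + ∑ t ∈ Finset.range k, q t := by
            rw [Finset.sum_range_succ]; ring
        _ ≤ u 0 := (add_le_add_left (h k) _).trans ih
  rw [ENNReal.tsum_eq_iSup_nat]
  exact iSup_le fun k => le_add_self.trans (partial_sums k)

theorem Real.inv_four_le_one_sub_inv_pow (m : ℕ) : (4 : ℝ)⁻¹ ≤ (1 - ((m : ℝ) + 1)⁻¹) ^ m := by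
  rcases Nat.eq_zero_or_pos m with rfl | hm
  · norm_num
  have hm' : (0 : ℝ) < m := by exact_mod_cast hm
  have hbase : 1 - ((m : ℝ) + 1)⁻¹ = (1 + (m : ℝ)⁻¹)⁻¹ := by
    field_simp
    ring
  rw [hbase, inv_pow]
  refine inv_anti₀ (by positivity) (one_add_inv_pow_le_exp.trans ?_)
  linarith [exp_one_lt_d9]

theorem ENNReal.inv_four_le_one_sub_inv_pow {n : ℕ} (hn : 0 < n) :
    (4 : ℝ≥0∞)⁻¹ ≤ (1 - (n : ℝ≥0∞)⁻¹) ^ (n - 1) := by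
  obtain ⟨m, rfl⟩ : ∃ m, n = m + 1 := ⟨n - 1, by omega⟩
  have hcast : (1 - ((m + 1 : ℕ) : ℝ≥0∞)⁻¹) = ENNReal.ofReal (1 - ((m : ℝ) + 1)⁻¹) := by
    rw [ENNReal.ofReal_sub _ (by positivity), ENNReal.ofReal_one,
      ENNReal.ofReal_inv_of_pos (by positivity), ← Nat.cast_add_one, ENNReal.ofReal_natCast]
  rw [hcast, ← ENNReal.ofReal_pow (sub_nonneg.mpr (inv_le_one_of_one_le₀ (by simp))),
    Nat.add_sub_cancel, ← ENNReal.ofReal_ofNat 4, ← ENNReal.ofReal_inv_of_pos (by norm_num)]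
  exact ENNReal.ofReal_le_ofReal (Real.inv_four_le_one_sub_inv_pow m)

namespace MakespanDyn

variable {n : ℕ}

section Drift

variable (step : (Fin n → ℝ) → (Fin n → Bool) → PMF (Fin n → Bool)) (pr : Fin n → ℝ)

theorem exists_eq_cons_of_mem_support_run {x₀ : Fin n → Bool} {t : ℕ} {h : List (Cfg n)}
    (hh : h ∈ (run step (fun _ => pr) (x₀, pr) t).support) : ∃ x l, h = (x, pr) :: l := by
  cases t with
  | zero => exact ⟨x₀, [], by simpa [run] using hh⟩
  | succ t =>
    obtain ⟨h', -, hmem⟩ := (PMF.mem_support_bind_iff _ _ _).mp hh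
    obtain ⟨x, -, rfl⟩ := (PMF.mem_support_map_iff _ _ _).mp hmem
    exact ⟨x, h', rfl⟩

variable {good : Cfg n → Prop} {Φ : (Fin n → Bool) → ℝ≥0∞} {ρ : ℝ≥0∞}

/-- `alive.indicator (Φ ·.headI.1)` is the potential stopped at the first good configuration. -/
theorem tsum_run_succ_add_le
    (hdrift : ∀ x, ¬ good (x, pr) → ∑' y, step pr x y * Φ y + ρ ≤ Φ x)
    (x₀ : Fin n → Bool) (t : ℕ) :
    let alive : Set (List (Cfg n)) := {h | ∀ c ∈ h, ¬ good c}
    ∑' h, run step (fun _ => pr) (x₀, pr) (t + 1) h * alive.indicator (Φ ·.headI.1) h +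
        ρ * (run step (fun _ => pr) (x₀, pr) t).toOuterMeasure alive ≤
      ∑' h, run step (fun _ => pr) (x₀, pr) t h * alive.indicator (Φ ·.headI.1) h := by
  intro alive
  set μ := run step (fun _ => pr) (x₀, pr) t
  have hsucc : run step (fun _ => pr) (x₀, pr) (t + 1) =
      μ.bind fun h => (step pr h.headI.1).map fun y => (y, pr) :: h := rfl
  rw [hsucc, PMF.tsum_bind_mul, PMF.toOuterMeasure_apply, ← ENNReal.tsum_mul_left,
    ← ENNReal.tsum_add]
  refine ENNReal.tsum_le_tsum fun h => ?_
  rw [PMF.tsum_map_mul]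
  by_cases ha : h ∈ alive
  · rcases eq_or_ne (μ h) 0 with hμ | hμ
    · simp [hμ]
    obtain ⟨x, l, rfl⟩ :=
      exists_eq_cons_of_mem_support_run step pr ((PMF.mem_support_iff μ h).mpr hμ)
    have hx : ¬ good (x, pr) := ha (x, pr) List.mem_cons_self
    rw [Set.indicator_of_mem ha, Set.indicator_of_mem ha, mul_comm ρ, ← mul_add]
    gcongr
    calc ∑' y, step pr x y * alive.indicator (Φ ·.headI.1) ((y, pr) :: (x, pr) :: l) + ρ
        ≤ ∑' y, step pr x y * Φ y + ρ := by
          gcongr with y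
          exact Set.indicator_le_self _ _ _
      _ ≤ Φ x := hdrift x hx
  · have hdead : ∀ y, (y, pr) :: h ∉ alive := fun y hy =>
      ha fun c hc => hy c (List.mem_cons_of_mem _ hc)
    simp [Set.indicator_of_notMem ha, Set.indicator_of_notMem (hdead _)]

theorem mul_expectedHittingTime_run_le
    (hdrift : ∀ x, ¬ good (x, pr) → ∑' y, step pr x y * Φ y + ρ ≤ Φ x) (x₀ : Fin n → Bool) :
    ρ * expectedHittingTime (run step (fun _ => pr) (x₀, pr)) good ≤ Φ x₀ := by
  unfold expectedHittingTime
  rw [← ENNReal.tsum_mul_left]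
  refine (ENNReal.tsum_le_of_add_le (tsum_run_succ_add_le step pr hdrift x₀)).trans ?_
  simp only [run, PMF.tsum_pure_mul]
  exact Set.indicator_le_self _ _ _

end Drift

section Makespan

variable (p : Fin n → ℝ)

theorem load_false_add_load_true (x : Fin n → Bool) :
    load p x false + load p x true = ∑ i, p i := by
  simp only [load, ← Finset.sum_add_distrib]
  refine Finset.sum_congr rfl fun i _ => ?_
  cases x i <;> simp

theorem disc_eq_two_mul_mspan_sub (x : Fin n → Bool) : disc p x = 2 * mspan p x - ∑ i, p i := by
  rw [← load_false_add_load_true, disc, mspan]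
  rcases le_total (load p x false) (load p x true) with h | h
  · rw [max_eq_right h, abs_of_nonpos (by linarith)]; ring
  · rw [max_eq_left h, abs_of_nonneg (by linarith)]; ring

theorem mspan_le_mspan_iff (x y : Fin n → Bool) : mspan p y ≤ mspan p x ↔ disc p y ≤ disc p x := by
  rw [disc_eq_two_mul_mspan_sub, disc_eq_two_mul_mspan_sub]
  constructor <;> intro h <;> linarith

theorem eaStep_drift (hn : 0 < n) (x m : Fin n → Bool)
    (hm : disc p (fun i => xor (m i) (x i)) + 2 ≤ disc p x) :
    ∑' y, eaStep hn p x y * ENNReal.ofReal (disc p y / 2) + maskPMF n hn m ≤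
      ENNReal.ofReal (disc p x / 2) := by
  rw [eaStep, PMF.tsum_map_mul]
  refine PMF.tsum_mul_add_le _ (fun m' => ?_) ?_
  · dsimp only
    split_ifs with h
    · exact ENNReal.ofReal_le_ofReal (by linarith [(mspan_le_mspan_iff p _ _).mp h])
    · exact le_rfl
  · have hacc : mspan p (fun i => xor (m i) (x i)) ≤ mspan p x :=
      (mspan_le_mspan_iff p _ _).mpr (by linarith)
    have hy : 0 ≤ disc p (fun i => xor (m i) (x i)) := abs_nonneg _
    dsimp only
    rw [if_pos hacc, ← ENNReal.ofReal_one, ← ENNReal.ofReal_add (by positivity) zero_le_one]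
    exact ENNReal.ofReal_le_ofReal (by linarith)

end Makespan

theorem disc_le_sum {p : Fin n → ℝ} (hp : ∀ i, 0 ≤ p i) (x : Fin n → Bool) :
    disc p x ≤ ∑ i, p i := by
  have hload : ∀ b, 0 ≤ load p x b := fun b =>
    Finset.sum_nonneg fun i _ => by split_ifs <;> simp [hp i]
  rw [← load_false_add_load_true, disc, abs_sub_le_iff]
  constructor <;> linarith [hload false, hload true]

theorem maskPMF_decide_mem (hn : 0 < n) (T : Finset (Fin n)) :
    maskPMF n hn (fun i => decide (i ∈ T)) =
      (n : ℝ≥0∞)⁻¹ ^ T.card * (1 - (n : ℝ≥0∞)⁻¹) ^ (n - T.card) := by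
  change ∏ i : Fin n, _ = _
  simp [Finset.prod_ite, Finset.filter_not, Finset.card_sdiff]

theorem inv_four_mul_sq_le_maskPMF (hn : 0 < n) {T : Finset (Fin n)}
    (hT : T.card ∈ Finset.Icc 1 2) :
    (4 * (n : ℝ≥0∞) ^ 2)⁻¹ ≤ maskPMF n hn (fun i => decide (i ∈ T)) := by
  obtain ⟨hT₁, hT₂⟩ := Finset.mem_Icc.mp hT
  have hinv : (n : ℝ≥0∞)⁻¹ ≤ 1 := ENNReal.inv_le_one.mpr (by exact_mod_cast hn)
  rw [maskPMF_decide_mem, ENNReal.mul_inv (by simp) (by simp), mul_comm, ENNReal.inv_pow]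
  refine mul_le_mul' (pow_le_pow_right_of_le_one' hinv hT₂) ?_
  exact (ENNReal.inv_four_le_one_sub_inv_pow hn).trans
    (pow_le_pow_right_of_le_one' tsub_le_self (by omega))

section Imbalance

variable (p : Fin n → ℕ)

def imbalance (x : Fin n → Bool) : ℤ :=
  ∑ i, if x i then -(p i : ℤ) else p i

theorem disc_natCast (x : Fin n → Bool) :
    disc (fun i => (p i : ℝ)) x = |(imbalance p x : ℝ)| := by
  simp only [disc, load, imbalance, ← Finset.sum_sub_distrib, Int.cast_sum]
  congr 1
  refine Finset.sum_congr rfl fun i _ => ?_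
  cases x i <;> simp

theorem imbalance_not (x : Fin n → Bool) : imbalance p (fun i => !x i) = -imbalance p x := by
  simp only [imbalance, ← Finset.sum_neg_distrib]
  refine Finset.sum_congr rfl fun i _ => ?_
  by_cases h : x i <;> simp [h]

theorem imbalance_xor (x : Fin n → Bool) (T : Finset (Fin n)) :
    imbalance p (fun i => xor (decide (i ∈ T)) (x i)) =
      imbalance p x - 2 * ∑ i ∈ T, if x i then -(p i : ℤ) else p i := by
  have hterm : ∀ i, (if xor (decide (i ∈ T)) (x i) then -(p i : ℤ) else p i) =
      (if x i then -(p i : ℤ) else p i) -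
        2 * if i ∈ T then (if x i then -(p i : ℤ) else p i) else 0 := by
    intro i
    by_cases hi : i ∈ T <;> cases x i <;> simp [hi] <;> ring
  simp only [imbalance, hterm, Finset.sum_sub_distrib, ← Finset.mul_sum, Finset.sum_ite_mem,
    Finset.univ_inter]

end Imbalance

section GapCondition

variable {p : Fin n → ℕ} {G : ℕ}

/-- `S` plays the fuller machine: the sum is the load that flipping `T` moves off it. -/
theorem exists_transfer_mem_Ioo (hp : ∀ i, p i ∈ Finset.Icc 1 n)
    (hgap : ∀ a : ℕ, 1 ≤ a → a + G ≤ n + 1 → ∃ j, a ≤ p j ∧ p j ≤ a + G - 1)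
    (S : Finset (Fin n)) {D : ℤ} (hGD : (G : ℤ) < D)
    (hDS : D ≤ ∑ i ∈ S, (p i : ℤ)) :
    ∃ T : Finset (Fin n), T.card ∈ Finset.Icc 1 2 ∧
      ∑ i ∈ T, (if i ∈ S then (p i : ℤ) else -p i) ∈ Set.Ioo 0 D := by
  by_cases hsmall : ∃ j ∈ S, (p j : ℤ) < D
  · obtain ⟨j, hjS, hj⟩ := hsmall
    have := Finset.mem_Icc.mp (hp j)
    exact ⟨{j}, by simp, by simp [hjS]; omega, by simpa [hjS]⟩
  push Not at hsmall
  have hSne : S.Nonempty := by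
    rw [Finset.nonempty_iff_ne_empty]
    rintro rfl
    simp at hDS
    omega
  obtain ⟨j, hjS, hjmin⟩ := S.exists_min_image p hSne
  have hj := Finset.mem_Icc.mp (hp j)
  have hjD := hsmall j hjS
  obtain ⟨k, hk₁, hk₂⟩ := hgap (p j - G) (by omega) (by omega)
  have hkS : k ∉ S := fun hkS => by have := hjmin k hkS; omega
  have hjk : j ≠ k := by rintro rfl; exact hkS hjS
  refine ⟨{j, k}, by simp [Finset.card_pair hjk], ?_⟩
  rw [Finset.sum_pair hjk, if_pos hjS, if_neg hkS, Set.mem_Ioo]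
  omega

theorem exists_abs_imbalance_xor_add_two_le (hp : ∀ i, p i ∈ Finset.Icc 1 n)
    (hgap : ∀ a : ℕ, 1 ≤ a → a + G ≤ n + 1 → ∃ j, a ≤ p j ∧ p j ≤ a + G - 1)
    (x : Fin n → Bool) (hx : (G : ℤ) < |imbalance p x|) :
    ∃ T : Finset (Fin n), T.card ∈ Finset.Icc 1 2 ∧
      |imbalance p (fun i => xor (decide (i ∈ T)) (x i))| + 2 ≤ |imbalance p x| := by
  wlog hpos : 0 ≤ imbalance p x generalizing x
  · obtain ⟨T, hT, hle⟩ := this (fun i => !x i) (by rwa [imbalance_not, abs_neg])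
      (by rw [imbalance_not]; linarith)
    have hcomm : (fun i => xor (decide (i ∈ T)) (!x i)) = fun i => !xor (decide (i ∈ T)) (x i) :=
      funext fun i => Bool.xor_not _ _
    rw [hcomm, imbalance_not, imbalance_not, abs_neg, abs_neg] at hle
    exact ⟨T, hT, hle⟩
  rw [abs_of_nonneg hpos] at hx ⊢
  set S := Finset.univ.filter fun i => x i = false
  have hDS : imbalance p x ≤ ∑ i ∈ S, (p i : ℤ) := by
    rw [Finset.sum_filter, imbalance]
    gcongr with i
    cases x i <;> simp
  obtain ⟨T, hT, hτ₀, hτD⟩ := exists_transfer_mem_Ioo hp hgap S hx hDS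
  have hτ : ∑ i ∈ T, (if x i then -(p i : ℤ) else p i) =
      ∑ i ∈ T, (if i ∈ S then (p i : ℤ) else -p i) :=
    Finset.sum_congr rfl fun i _ => by by_cases h : x i <;> simp [S, h]
  refine ⟨T, hT, ?_⟩
  rw [imbalance_xor, hτ, ← le_sub_iff_add_le, abs_le]
  constructor <;> omega

theorem exists_disc_xor_add_two_le (hp : ∀ i, p i ∈ Finset.Icc 1 n)
    (hgap : ∀ a : ℕ, 1 ≤ a → a + G ≤ n + 1 → ∃ j, a ≤ p j ∧ p j ≤ a + G - 1)
    (x : Fin n → Bool)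
    (hx : (G : ℝ) < disc (fun i => (p i : ℝ)) x) :
    ∃ T : Finset (Fin n), T.card ∈ Finset.Icc 1 2 ∧
      disc (fun i => (p i : ℝ)) (fun i => xor (decide (i ∈ T)) (x i)) + 2 ≤
        disc (fun i => (p i : ℝ)) x := by
  simp only [disc_natCast] at hx ⊢
  obtain ⟨T, hT, hle⟩ := exists_abs_imbalance_xor_add_two_le hp hgap x (by exact_mod_cast hx)
  exact ⟨T, hT, by exact_mod_cast hle⟩

end GapCondition

/-- Let the processing times `p : Fin n → ℕ` be fixed integers in
`{1, …, n}` such that every set of `G` consecutive values contained in `{1, …, n}`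
contains the processing time of at least one job.  Then, from any initial solution,
the expected number of iterations of the (1+1) EA until the current solution `x`
satisfies `d(x) ≤ G` is `O(n⁴)`. -/
theorem ea_gap_expected_time :
    ∃ C : ℝ, 0 < C ∧
      ∀ (n : ℕ) (hn : 0 < n) (G : ℕ), 1 ≤ G →
        ∀ p : Fin n → ℕ, (∀ i, p i ∈ Finset.Icc 1 n) →
          (∀ a : ℕ, 1 ≤ a → a + G ≤ n + 1 → ∃ j, a ≤ p j ∧ p j ≤ a + G - 1) →
          ∀ x₀ : Fin n → Bool,
            expectedHittingTime
                (run (eaStep hn) (fun _ i => (p i : ℝ)) (x₀, fun i => (p i : ℝ)))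
                (fun c => disc c.2 c.1 ≤ G) ≤
              ENNReal.ofReal (C * (n : ℝ) ^ 4) := by
  refine ⟨2, two_pos, fun n hn G _ p hp hgap x₀ => ?_⟩
  set pr : Fin n → ℝ := fun i => (p i : ℝ)
  set ρ : ℝ≥0∞ := (4 * (n : ℝ≥0∞) ^ 2)⁻¹
  have hdrift : ∀ x, ¬ disc pr x ≤ G →
      ∑' y, eaStep hn pr x y * ENNReal.ofReal (disc pr y / 2) + ρ ≤
        ENNReal.ofReal (disc pr x / 2) := by
    intro x hx
    obtain ⟨T, hT, hmove⟩ := exists_disc_xor_add_two_le hp hgap x (not_le.mp hx)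
    exact (add_le_add_right (inv_four_mul_sq_le_maskPMF hn hT) _).trans
      (eaStep_drift pr hn x _ hmove)
  have hhit := mul_expectedHittingTime_run_le (eaStep hn) pr
    (good := fun c => disc c.2 c.1 ≤ G) (Φ := fun x => ENNReal.ofReal (disc pr x / 2)) hdrift x₀
  have hdisc : disc pr x₀ ≤ n * n :=
    (disc_le_sum (fun i => Nat.cast_nonneg _) x₀).trans <| by
      simpa using Finset.sum_le_card_nsmul Finset.univ pr n fun i _ => by
        simpa [pr] using (Finset.mem_Icc.mp (hp i)).2
  rw [ENNReal.mul_le_iff_le_inv (by simp [ρ, ENNReal.mul_eq_top]) (by simp [ρ, hn.ne']),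
    inv_inv] at hhit
  refine hhit.trans ?_
  rw [show (4 * (n : ℝ≥0∞) ^ 2) = ENNReal.ofReal (4 * n ^ 2) by norm_cast,
    ← ENNReal.ofReal_mul (by positivity)]
  exact ENNReal.ofReal_le_ofReal (by nlinarith)

end MakespanDyn
end

section
/- Let p_1,…,p_n ∈ {1,…,n} be integers such that every set of G consecutive values contained in {1,…,n} contains the processing time of at least one job, where G ≥ 1. Let x ∈ {0,1}^n be a solution with d(x) > G. Then there exists y ∈ {0,1}^n differing from x in at most two bits such that d(y) ≤ d(x) − 1 (and consequently f(y) ≤ f(x)). Moreover, y can be chosen either by moving a single job of size at most G from the fuller machine to the emptier machine, or by swapping a job j on the fuller machine with a job j' on the emptier machine satisfying 1 ≤ p_j − p_{j'} ≤ G. -/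
open scoped BigOperators ENNReal

namespace MakespanDyn

lemma disc_eq {n : ℕ} (P : Fin n → ℝ) (x : Fin n → Bool) (b : Bool)
    (h : load P x (!b) ≤ load P x b) : disc P x = load P x b - load P x (!b) := by
  cases b
  · simp only [Bool.not_false] at h ⊢
    rw [disc, abs_of_nonneg (by linarith)]
  · simp only [Bool.not_true] at h ⊢
    rw [disc, abs_of_nonpos (by linarith)]; ring

lemma mspan_eq {n : ℕ} (P : Fin n → ℝ) (x : Fin n → Bool) (b : Bool)
    (h : load P x (!b) ≤ load P x b) : mspan P x = load P x b := by
  cases b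
  · simp only [Bool.not_false] at h
    exact max_eq_left h
  · simp only [Bool.not_true] at h
    exact max_eq_right h

lemma mspan_eq' {n : ℕ} (P : Fin n → ℝ) (y : Fin n → Bool) (b : Bool) :
    mspan P y = max (load P y b) (load P y (!b)) := by
  cases b <;> simp [mspan, max_comm]

lemma load_flip {n : ℕ} (P : Fin n → ℝ) (x : Fin n → Bool) (j : Fin n) (b : Bool) :
    load P (flip x j) b = load P x b + (if x j = b then -P j else P j) := by
  have h : ∀ i, (if flip x j i = b then P i else 0)
      = Function.update (fun i => if x i = b then P i else 0) j
          (if (!x j) = b then P j else 0) i := by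
    intro i
    rcases eq_or_ne i j with rfl | h
    · simp [flip]
    · simp [flip, Function.update_of_ne h]
  unfold load
  rw [Finset.sum_congr rfl fun i _ => h i,
    Finset.sum_update_of_mem (Finset.mem_univ j),
    Finset.sum_eq_add_sum_sdiff_singleton_of_mem (Finset.mem_univ j)
      (fun i => if x i = b then P i else 0)]
  cases b <;> cases hxj : x j <;> simp [hxj] <;> ring

lemma load_natCast {n : ℕ} (p : Fin n → ℕ) (x : Fin n → Bool) (b : Bool) :
    load (fun i => (p i : ℝ)) x b = ((∑ i, if x i = b then p i else 0 : ℕ) : ℝ) := by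
  unfold load
  push_cast
  rfl

lemma key {n : ℕ} (P : Fin n → ℝ) (x y : Fin n → Bool) (b : Bool) (δ G : ℝ)
    (hyb : load P y b = load P x b - δ)
    (hyb' : load P y (!b) = load P x (!b) + δ)
    (hδ1 : 1 ≤ δ) (hδG : δ ≤ G)
    (hd : G + 1 ≤ load P x b - load P x (!b)) :
    disc P y ≤ disc P x - 1 ∧ mspan P y ≤ mspan P x := by
  have hfull : load P x (!b) ≤ load P x b := by linarith
  have hdx : disc P x = load P x b - load P x (!b) := disc_eq P x b hfull
  have h1 : load P y b - load P y (!b) = load P x b - load P x (!b) - 2*δ := by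
    rw [hyb, hyb']; ring
  have hdy : disc P y = |load P x b - load P x (!b) - 2*δ| := by
    cases b
    · simp only [Bool.not_false] at h1 ⊢
      rw [disc, h1]
    · simp only [Bool.not_true] at h1 ⊢
      rw [disc, abs_sub_comm, h1]
  constructor
  · rw [hdy, hdx, abs_le]
    constructor <;> linarith
  · rw [mspan_eq' P y b, hyb, hyb', mspan_eq P x b hfull]
    exact max_le (by linarith) (by linarith)

/-- If every set of `G` consecutive values contained in `{1, …, n}`
contains the processing time of at least one job and `d(x) > G`, then there is a `y`
differing from `x` in at most two bits with `d(y) ≤ d(x) - 1` and `f(y) ≤ f(x)`;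
moreover `y` can be chosen either by moving a single job of size at most `G` from the
fuller machine to the emptier machine, or by swapping a job `j` on the fuller machine
with a job `j'` on the emptier machine satisfying `1 ≤ p_j - p_{j'} ≤ G`. -/
theorem exists_improving_two_bit_move
    (n G : ℕ) (hG : 1 ≤ G) (p : Fin n → ℕ) (hp : ∀ i, p i ∈ Finset.Icc 1 n)
    (hgap : ∀ a : ℕ, 1 ≤ a → a + G ≤ n + 1 → ∃ j, a ≤ p j ∧ p j ≤ a + G - 1)
    (x : Fin n → Bool) (hd : (G : ℝ) < disc (fun i => (p i : ℝ)) x) :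
    ∃ y : Fin n → Bool,
      (Finset.univ.filter fun i => y i ≠ x i).card ≤ 2 ∧
      disc (fun i => (p i : ℝ)) y ≤ disc (fun i => (p i : ℝ)) x - 1 ∧
      mspan (fun i => (p i : ℝ)) y ≤ mspan (fun i => (p i : ℝ)) x ∧
      ((∃ j, load (fun i => (p i : ℝ)) x (x j) = mspan (fun i => (p i : ℝ)) x ∧
          p j ≤ G ∧ y = flip x j) ∨
        (∃ j j', load (fun i => (p i : ℝ)) x (x j) = mspan (fun i => (p i : ℝ)) x ∧
          x j' ≠ x j ∧ p j' + 1 ≤ p j ∧ p j ≤ p j' + G ∧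
          y = flip (flip x j) j')) := by
  set P : Fin n → ℝ := fun i => (p i : ℝ) with hP
  obtain ⟨b, hfull⟩ : ∃ b : Bool, load P x (!b) ≤ load P x b := by
    rcases le_total (load P x true) (load P x false) with h | h
    · exact ⟨false, by simpa using h⟩
    · exact ⟨true, by simpa using h⟩
  -- integrality: discrepancy is at least G + 1
  have hd' : (G : ℝ) + 1 ≤ load P x b - load P x (!b) := by
    have h0 := load_natCast p x b
    have h1 := load_natCast p x (!b)
    rw [← hP] at h0 h1
    set A := ∑ i, if x i = b then p i else 0 with hA
    set B := ∑ i, if x i = (!b) then p i else 0 with hB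
    have hBA : B ≤ A := by
      have := hfull
      rw [h0, h1] at this
      exact_mod_cast this
    have h2 : (G : ℝ) < (A : ℝ) - B := by
      have hdd := hd
      rw [disc_eq P x b hfull] at hdd
      rw [h0, h1] at hdd
      exact hdd
    have h3 : G < A - B := by
      rw [← Nat.cast_sub hBA] at h2
      exact_mod_cast h2
    have h4 : G + 1 ≤ A - B := h3
    rw [h0, h1, ← Nat.cast_sub hBA]
    exact_mod_cast h4
  -- the fuller machine is nonempty
  have hFne : (Finset.univ.filter fun i => x i = b).Nonempty := by
    by_contra h
    rw [Finset.not_nonempty_iff_eq_empty] at h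
    have hzero : load P x b = 0 := by
      rw [load]
      apply Finset.sum_eq_zero
      intro i _
      have hib : x i ≠ b := by
        intro hib
        have : i ∈ Finset.univ.filter fun i => x i = b := by simp [hib]
        simp [h] at this
      simp [hib]
    have hnonneg : 0 ≤ load P x (!b) := by
      rw [load]
      apply Finset.sum_nonneg
      intro i _
      split_ifs
      · exact Nat.cast_nonneg _
      · exact le_rfl
    have hGnn : (0 : ℝ) ≤ G := Nat.cast_nonneg _
    linarith
  obtain ⟨j, hjF, hmin⟩ := Finset.exists_min_image _ p hFne
  have hxj : x j = b := (Finset.mem_filter.mp hjF).2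
  have hpj := Finset.mem_Icc.mp (hp j)
  have hmspan : load P x (x j) = mspan P x := by
    rw [hxj, mspan_eq P x b hfull]
  by_cases hpjG : p j ≤ G
  · -- move job j
    refine ⟨flip x j, ?_, ?_, ?_, Or.inl ⟨j, hmspan, hpjG, rfl⟩⟩
    case _ =>
      have hsub : (Finset.univ.filter fun i => flip x j i ≠ x i) ⊆ {j} := by
        intro i hi
        simp only [Finset.mem_filter, Finset.mem_univ, true_and] at hi
        by_contra hij
        simp only [Finset.mem_singleton] at hij
        exact hi (by simp [flip, Function.update_of_ne hij])
      calc (Finset.univ.filter fun i => flip x j i ≠ x i).card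
          ≤ ({j} : Finset (Fin n)).card := Finset.card_le_card hsub
        _ ≤ 2 := by simp
    all_goals
      have hyb : load P (flip x j) b = load P x b - P j := by
        rw [load_flip, if_pos hxj]; ring
      have hyb' : load P (flip x j) (!b) = load P x (!b) + P j := by
        rw [load_flip, if_neg (by rw [hxj]; exact (Bool.not_ne_self b).symm)]
      have hδ1 : (1 : ℝ) ≤ P j := by
        show (1 : ℝ) ≤ (p j : ℝ); exact_mod_cast hpj.1
      have hδG : P j ≤ (G : ℝ) := by
        show (p j : ℝ) ≤ (G : ℝ); exact_mod_cast hpjG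
      have := key P x (flip x j) b (P j) G hyb hyb' hδ1 hδG hd'
    · exact this.1
    · exact this.2
  · -- swap jobs j and j'
    have hGj : G + 1 ≤ p j := by omega
    obtain ⟨j', hj'1, hj'2⟩ := hgap (p j - G) (by omega) (by omega)
    have hj'lt : p j' + 1 ≤ p j := by omega
    have hj'ge : p j ≤ p j' + G := by omega
    have hxj' : x j' ≠ b := by
      intro hbad
      have : j' ∈ Finset.univ.filter fun i => x i = b := by simp [hbad]
      have := hmin j' this
      omega
    have hxj'2 : x j' = !b := by
      cases hb : x j' <;> cases b <;> simp_all
    have hj'j : j' ≠ j := by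
      intro h
      rw [h, hxj] at hxj'
      exact hxj' rfl
    have hflipj' : flip x j j' = x j' := by
      simp [flip, Function.update_of_ne hj'j]
    refine ⟨flip (flip x j) j', ?_, ?_, ?_,
      Or.inr ⟨j, j', hmspan, by rw [hxj]; exact hxj', hj'lt, hj'ge, rfl⟩⟩
    case _ =>
      have hsub : (Finset.univ.filter fun i => flip (flip x j) j' i ≠ x i)
          ⊆ {j, j'} := by
        intro i hi
        simp only [Finset.mem_filter, Finset.mem_univ, true_and] at hi
        by_contra hij
        simp only [Finset.mem_insert, Finset.mem_singleton, not_or] at hij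
        exact hi (by
          simp [flip, Function.update_of_ne hij.2, Function.update_of_ne hij.1])
      calc (Finset.univ.filter fun i => flip (flip x j) j' i ≠ x i).card
          ≤ ({j, j'} : Finset (Fin n)).card := Finset.card_le_card hsub
        _ ≤ 2 := by
          apply le_trans (Finset.card_insert_le _ _)
          simp
    all_goals
      have hyb : load P (flip (flip x j) j') b = load P x b - (P j - P j') := by
        rw [load_flip, hflipj', if_neg hxj', load_flip, if_pos hxj]; ring
      have hyb' : load P (flip (flip x j) j') (!b)
          = load P x (!b) + (P j - P j') := by
        rw [load_flip, hflipj', if_pos hxj'2, load_flip,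
          if_neg (by rw [hxj]; exact (Bool.not_ne_self b).symm)]
        ring
      have hδ1 : (1 : ℝ) ≤ P j - P j' := by
        have : (p j' : ℝ) + 1 ≤ (p j : ℝ) := by exact_mod_cast hj'lt
        show (1 : ℝ) ≤ (p j : ℝ) - (p j' : ℝ); linarith
      have hδG : P j - P j' ≤ (G : ℝ) := by
        have : (p j : ℝ) ≤ (p j' : ℝ) + G := by exact_mod_cast hj'ge
        show (p j : ℝ) - (p j' : ℝ) ≤ (G : ℝ); linarith
      have := key P x (flip (flip x j) j') b (P j - P j') G hyb hyb' hδ1 hδG hd'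
    · exact this.1
    · exact this.2

end MakespanDyn
end
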